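/- Let j ≥ 2 and ℓ ≥ 2 be integers and let T'_{j,ℓ} be the graph obtained from the complete j-ary tree T_{j,ℓ} by adding j new vertices w_1, …, w_j, each joined by an edge to every leaf of T_{j,ℓ}. Then for the root v of T_{j,ℓ} and every integer δ ≥ 0, the propagating estimator satisfies k̂_δ(v) = k(v) = j. -/

import Mathlib

/-!
Every vertex of `T'_{j,ℓ}` has degree at least `j`: an internal tree vertex has its `j` children,
a leaf has the `j` extra vertices, and each extra vertex sees all leaves; the root has degree
exactly `j`. At a vertex of minimum degree both estimators equal the degree: the whole graph
witnesses the core bound, and a lower bound on all degrees survives every propagation step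
because the smallest neighbour value already satisfies it.
-/

open SimpleGraph

variable {V : Type*}

/-- The degree of `u` inside the subgraph of `G` induced on the vertex set `S`. -/
noncomputable def degIn (G : SimpleGraph V) (S : Set V) (u : V) : ℕ :=
  {w ∈ S | G.Adj u w}.ncard

/-- `v` belongs to the `k`-core of `G`: there is a vertex set containing `v` all of whose
vertices have degree at least `k` within the induced subgraph. -/
def inCore (G : SimpleGraph V) (k : ℕ) (v : V) : Prop :=
  ∃ S : Set V, v ∈ S ∧ ∀ u ∈ S, k ≤ degIn G S u

/-- The core number of `v`: the largest `k` such that `v` belongs to the `k`-core of `G`. -/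
noncomputable def coreNumber (G : SimpleGraph V) (v : V) : ℕ :=
  sSup {k | inCore G k v}

/-- Degree of a vertex. -/
noncomputable def deg (G : SimpleGraph V) (v : V) : ℕ :=
  (G.neighborSet v).ncard

/-- The `δ`-neighborhood of `v`: all vertices at shortest-path distance at most `δ` from `v`. -/
def ball (G : SimpleGraph V) (v : V) (δ : ℕ) : Set V :=
  {u | G.Reachable v u ∧ G.dist v u ≤ δ}

/-- The induced estimator `k̆_δ(v)`: the core number of `v` in `G[N_δ(v)]`. -/
noncomputable def kBreve (G : SimpleGraph V) (v : V) (δ : ℕ) : ℕ :=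
  coreNumber (G.induce (_root_.ball G v δ)) ⟨v, Reachable.refl v, by rw [SimpleGraph.dist_self]; exact Nat.zero_le _⟩

/-- Neighborhood of `v` as a `Finset`. -/
noncomputable def nbhd (G : SimpleGraph V) [Finite V] (v : V) : Finset V :=
  (G.neighborSet v).toFinite.toFinset

/-- The propagating estimator `k̂_δ(v)`: `k̂_0(v) = d(v)`, and `k̂_δ(v)` is the max over
`1 ≤ i ≤ d(v)` of `min (k̂_{δ-1}(u_i)) (d(v) - i + 1)`, where `u_1, …, u_{d(v)}` are the
neighbors of `v` listed with `k̂_{δ-1}`-values nondecreasing.  In the formalization the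
sorted list `l` of the neighbors' `k̂_{δ-1}`-values is indexed from `0`, so entry `i` of `l`
is `k̂_{δ-1}(u_{i+1})` and `d(v) - i = d(v) - (i+1) + 1`. -/
noncomputable def kHat (G : SimpleGraph V) [Finite V] : ℕ → V → ℕ
  | 0, v => deg G v
  | δ + 1, v =>
    let l : List ℕ := Multiset.sort ((nbhd G v).val.map (kHat G δ)) (· ≤ ·)
    (Finset.range l.length).sup fun i => min (l.getD i 0) (deg G v - i)

/-- The complete `j`-ary tree with `ℓ` levels.  A vertex at level `i` (for `1 ≤ i ≤ ℓ`) is a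
list of length `i - 1` over `Fin j` recording the path of child-choices from the root `[]`;
two vertices are adjacent iff one is obtained from the other by prepending one child-choice. -/
def Tjl (j ℓ : ℕ) : SimpleGraph {l : List (Fin j) // l.length < ℓ} where
  Adj x y := (∃ c : Fin j, (y : List (Fin j)) = c :: (x : List (Fin j)))
    ∨ (∃ c : Fin j, (x : List (Fin j)) = c :: (y : List (Fin j)))
  symm := ⟨fun _ _ h => Or.symm h⟩
  loopless := ⟨by
    rintro x (⟨c, hc⟩ | ⟨c, hc⟩) <;>
      · have := congrArg List.length hc
        simp at this⟩

instance (j ℓ : ℕ) : Finite {l : List (Fin j) // l.length < ℓ} :=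
  (List.finite_length_lt (Fin j) ℓ).to_subtype

/-- The root of `Tjl j ℓ`. -/
def root (j ℓ : ℕ) (h : 0 < ℓ) : {l : List (Fin j) // l.length < ℓ} :=
  ⟨[], by simpa using h⟩

/-- `T'_{j,ℓ}`: the complete `j`-ary tree with `ℓ` levels together with `j` extra vertices
`w_1, …, w_j` (the `Sum.inr` vertices), each adjacent to every leaf (level-`ℓ` vertex) of the
tree. -/
def Tjl' (j ℓ : ℕ) : SimpleGraph ({l : List (Fin j) // l.length < ℓ} ⊕ Fin j) where
  Adj x y :=
    match x, y with
    | Sum.inl a, Sum.inl b => (Tjl j ℓ).Adj a b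
    | Sum.inl a, Sum.inr _ => a.val.length = ℓ - 1
    | Sum.inr _, Sum.inl b => b.val.length = ℓ - 1
    | Sum.inr _, Sum.inr _ => False
  symm := ⟨by
    rintro (a | a) (b | b) h
    · exact h.symm
    · exact h
    · exact h
    · exact h⟩
  loopless := ⟨by
    rintro (a | a) h
    · exact (Tjl j ℓ).irrefl h
    · exact h⟩

section General

variable (G : SimpleGraph V)

lemma degIn_univ (u : V) : degIn G Set.univ u = deg G u := by
  simp [degIn, deg, SimpleGraph.neighborSet]

lemma degIn_le_deg [Finite V] (S : Set V) (u : V) : degIn G S u ≤ deg G u :=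
  Set.ncard_le_ncard fun _ hw => hw.2

lemma inCore_of_forall_le_deg {k : ℕ} (h : ∀ u, k ≤ deg G u) (v : V) : inCore G k v :=
  ⟨Set.univ, Set.mem_univ v, fun u _ => (degIn_univ G u).symm ▸ h u⟩

lemma coreNumber_le_deg [Finite V] (v : V) : coreNumber G v ≤ deg G v :=
  csSup_le' fun _ ⟨S, hvS, hS⟩ => (hS v hvS).trans (degIn_le_deg G S v)

lemma le_coreNumber_of_forall_le_deg [Finite V] {k : ℕ} (h : ∀ u, k ≤ deg G u) (v : V) :
    k ≤ coreNumber G v :=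
  le_csSup ⟨deg G v, fun _ ⟨S, hvS, hS⟩ => (hS v hvS).trans (degIn_le_deg G S v)⟩
    (inCore_of_forall_le_deg G h v)

variable [Finite V]

lemma card_nbhd (v : V) : (nbhd G v).card = deg G v :=
  (Set.ncard_eq_toFinset_card _ _).symm

lemma kHat_le_deg (δ : ℕ) (v : V) : kHat G δ v ≤ deg G v := by
  cases δ with
  | zero => exact le_rfl
  | succ δ => exact Finset.sup_le fun i _ => (min_le_right _ _).trans (Nat.sub_le _ _)

lemma le_kHat_of_forall_le_deg {k : ℕ} (h : ∀ u, k ≤ deg G u) (δ : ℕ) (v : V) :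
    k ≤ kHat G δ v := by
  induction δ generalizing v with
  | zero => exact h v
  | succ δ ih =>
    rcases Nat.eq_zero_or_pos k with rfl | hk
    · exact Nat.zero_le _
    set l := Multiset.sort ((nbhd G v).val.map (kHat G δ)) (· ≤ ·)
    have hlen : l.length = deg G v := by
      rw [Multiset.length_sort, Multiset.card_map, ← card_nbhd]
      rfl
    have hpos : 0 < l.length := hlen ▸ hk.trans_le (h v)
    have hfirst : k ≤ l.getD 0 0 := by
      rw [List.getD_eq_getElem l 0 hpos]
      obtain ⟨u, -, hu⟩ := Multiset.mem_map.1 ((Multiset.mem_sort _).1 (List.getElem_mem hpos))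
      exact hu ▸ ih u
    calc k ≤ min (l.getD 0 0) (deg G v - 0) := le_min hfirst (h v)
      _ ≤ kHat G (δ + 1) v :=
        Finset.le_sup (f := fun i => min (l.getD i 0) (deg G v - i)) (Finset.mem_range.2 hpos)

lemma kHat_eq_deg_of_forall_deg_le {v : V} (h : ∀ u, deg G v ≤ deg G u) (δ : ℕ) :
    kHat G δ v = deg G v :=
  (kHat_le_deg G δ v).antisymm (le_kHat_of_forall_le_deg G h δ v)

lemma coreNumber_eq_deg_of_forall_deg_le {v : V} (h : ∀ u, deg G v ≤ deg G u) :
    coreNumber G v = deg G v :=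
  (coreNumber_le_deg G v).antisymm (le_coreNumber_of_forall_le_deg G h v)

end General

section Tree

variable {j ℓ : ℕ}

lemma le_deg_Tjl' (hℓ : 2 ≤ ℓ) (u : {l : List (Fin j) // l.length < ℓ} ⊕ Fin j) :
    j ≤ deg (Tjl' j ℓ) u := by
  obtain ⟨f, hf_adj, hf_inj⟩ : ∃ f : Fin j → {l : List (Fin j) // l.length < ℓ} ⊕ Fin j,
      (∀ c, (Tjl' j ℓ).Adj u (f c)) ∧ Function.Injective f := by
    rcases u with a | w
    · by_cases hinner : a.val.length + 1 < ℓ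
      · refine ⟨fun c => .inl ⟨c :: a.val, by simpa using hinner⟩,
          fun c => Or.inl ⟨c, rfl⟩, ?_⟩
        intro x y hxy
        exact (List.cons_eq_cons.1 (Subtype.ext_iff.1 (Sum.inl_injective hxy))).1
      · have hleaf : a.val.length = ℓ - 1 := by have := a.2; omega
        exact ⟨Sum.inr, fun _ => hleaf, Sum.inr_injective⟩
    · have hleaf (c : Fin j) : (c :: List.replicate (ℓ - 2) c).length = ℓ - 1 := by
        simp only [List.length_cons, List.length_replicate]; omega
      refine ⟨fun c => .inl ⟨c :: List.replicate (ℓ - 2) c, by have := hleaf c; omega⟩,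
        hleaf, ?_⟩
      intro x y hxy
      exact (List.cons_eq_cons.1 (Subtype.ext_iff.1 (Sum.inl_injective hxy))).1
  calc j = (Set.univ : Set (Fin j)).ncard := by simp
    _ = (Set.range f).ncard := by rw [← Set.image_univ, Set.ncard_image_of_injective _ hf_inj]
    _ ≤ deg (Tjl' j ℓ) u := Set.ncard_le_ncard (Set.range_subset_iff.2 hf_adj)

lemma deg_Tjl'_root (hℓ : 2 ≤ ℓ) (h : 0 < ℓ) :
    deg (Tjl' j ℓ) (.inl (root j ℓ h)) = j := by
  refine le_antisymm ?_ (le_deg_Tjl' hℓ _)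
  have hsub : (Tjl' j ℓ).neighborSet (.inl (root j ℓ h)) ⊆
      Set.range fun c : Fin j => (.inl ⟨[c], by rw [List.length_singleton]; omega⟩ :
        {l : List (Fin j) // l.length < ℓ} ⊕ Fin j) := by
    rintro (b | w) hadj
    · rcases hadj with ⟨c, hc⟩ | ⟨c, hc⟩
      · exact ⟨c, by simp [Subtype.ext_iff, root, hc]⟩
      · simp [root] at hc
    · change ([] : List (Fin j)).length = ℓ - 1 at hadj
      rw [List.length_nil] at hadj; omega
  calc deg (Tjl' j ℓ) (.inl (root j ℓ h)) ≤ (Set.range _).ncard :=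
        Set.ncard_le_ncard hsub
    _ ≤ (Set.univ : Set (Fin j)).ncard := by rw [← Set.image_univ]; exact Set.ncard_image_le
    _ = j := by simp

end Tree

/-- in `T'_{j,ℓ}` (`j, ℓ ≥ 2`), for the root `v` of the underlying tree and
every `δ ≥ 0`, the propagating estimator satisfies `k̂_δ(v) = k(v) = j`. -/
theorem stmt17 (j ℓ : ℕ) (hℓ : 2 ≤ ℓ) (δ : ℕ) :
    kHat (Tjl' j ℓ) δ (Sum.inl (root j ℓ (by omega))) = j ∧
    coreNumber (Tjl' j ℓ) (Sum.inl (root j ℓ (by omega))) = j := by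
  have hℓ₀ : 0 < ℓ := by omega
  have hmin : ∀ u, deg (Tjl' j ℓ) (.inl (root j ℓ hℓ₀)) ≤ deg (Tjl' j ℓ) u :=
    fun u => (deg_Tjl'_root hℓ hℓ₀).trans_le (le_deg_Tjl' hℓ u)
  exact ⟨(kHat_eq_deg_of_forall_deg_le _ hmin δ).trans (deg_Tjl'_root hℓ hℓ₀),
    (coreNumber_eq_deg_of_forall_deg_le _ hmin).trans (deg_Tjl'_root hℓ hℓ₀)⟩
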